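/- arXiv:2506.09647 — 2 statements merged into one kernel-verified Lean document; each statement's English description precedes it below -/
import Mathlib

section
/- Multiplication by an orthogonal tensor preserves the Frobenius norm: if U is orthogonal under the t-product, then ‖U * T‖_F = ‖T‖_F for any compatible tensor T. -/
open Finset Complex

noncomputable section

/-- Circular convolution of two length-`n` tubes. -/
def cconv {R : Type*} [CommRing R] {n : ℕ} [NeZero n] (a b : ZMod n → R) : ZMod n → R :=
  fun k => ∑ j : ZMod n, a j * b (k - j)

/-- t-product of two third-order tensors (tubes indexed by `ZMod n3`). -/
def tProd3 {R : Type*} [CommRing R] {n1 n2 n4 n3 : ℕ} [NeZero n3]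
    (A : Fin n1 → Fin n2 → ZMod n3 → R) (B : Fin n2 → Fin n4 → ZMod n3 → R) :
    Fin n1 → Fin n4 → ZMod n3 → R :=
  fun i j k => ∑ l : Fin n2, cconv (A i l) (B l j) k

/-- Tensor transpose: transpose each frontal slice and reverse slices 2..n3
(with tubes indexed by `ZMod n3`, slice `k` goes to slice `-k`). -/
def ttrans {R : Type*} {n1 n2 n3 : ℕ} (A : Fin n1 → Fin n2 → ZMod n3 → R) :
    Fin n2 → Fin n1 → ZMod n3 → R :=
  fun j i k => A i j (-k)

/-- Identity tensor: first frontal slice the identity, all other slices zero. -/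
def tid {n n3 : ℕ} : Fin n → Fin n → ZMod n3 → ℝ :=
  fun i j k => if i = j ∧ k = 0 then 1 else 0

/-- A tensor is orthogonal if `Uᵀ * U = U * Uᵀ = I` under the t-product. -/
def IsOrthT {n n3 : ℕ} [NeZero n3] (U : Fin n → Fin n → ZMod n3 → ℝ) : Prop :=
  tProd3 (ttrans U) U = tid ∧ tProd3 U (ttrans U) = tid

/-! Unfold a tensor `A` into its block-circulant matrix `bcirc A`. The t-product becomes the
matrix product and the tensor transpose the matrix transpose, so `Uᵀ * U = I` gives
`(bcirc U)ᵀ * bcirc U = 1`. Such a matrix preserves the sum of squares of every column of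
`bcirc T`, and column `(j, 0)` of `bcirc T` lists the entries of the lateral slice `T(:, j, :)`. -/

open Matrix

section BlockCirculant

variable {R : Type*} {n1 n2 n3 : ℕ}

/-- Block `(p, q)` of `bcirc A` is the frontal slice `A(:, :, p - q)`. -/
def bcirc (A : Fin n1 → Fin n2 → ZMod n3 → R) : Matrix (Fin n1 × ZMod n3) (Fin n2 × ZMod n3) R :=
  fun x y => A x.1 y.1 (x.2 - y.2)

theorem bcirc_ttrans (A : Fin n1 → Fin n2 → ZMod n3 → R) : bcirc (ttrans A) = (bcirc A)ᵀ := by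
  ext x y
  simp only [bcirc, ttrans, transpose_apply, neg_sub]

theorem bcirc_tProd3 [CommRing R] {n4 : ℕ} [NeZero n3] (A : Fin n1 → Fin n2 → ZMod n3 → R)
    (B : Fin n2 → Fin n4 → ZMod n3 → R) : bcirc (tProd3 A B) = bcirc A * bcirc B := by
  ext ⟨i, p⟩ ⟨j, q⟩
  simp only [bcirc, tProd3, cconv, mul_apply, Fintype.sum_prod_type]
  refine Finset.sum_congr rfl fun l _ => ?_
  refine Fintype.sum_equiv (Equiv.subLeft p) _ _ fun r => ?_
  simp only [Equiv.subLeft_apply, sub_sub_cancel, sub_right_comm]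

theorem bcirc_tid {n : ℕ} : bcirc (tid : Fin n → Fin n → ZMod n3 → ℝ) = 1 := by
  ext ⟨i, p⟩ ⟨j, q⟩
  simp only [bcirc, tid, one_apply, Prod.mk.injEq, sub_eq_zero]

theorem IsOrthT.transpose_bcirc_mul_self {n : ℕ} [NeZero n3] {U : Fin n → Fin n → ZMod n3 → ℝ}
    (hU : IsOrthT U) : (bcirc U)ᵀ * bcirc U = 1 := by
  rw [← bcirc_ttrans, ← bcirc_tProd3, hU.1, bcirc_tid]

end BlockCirculant

theorem Matrix.transpose_mul_self_apply_self {m n R : Type*} [Fintype m] [Semiring R]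
    (X : Matrix m n R) (c : n) : (Xᵀ * X) c c = ∑ x, X x c ^ 2 := by
  simp only [mul_apply, transpose_apply, sq]

theorem Matrix.sum_sq_mul_apply_of_transpose_mul_self {m n o R : Type*} [Fintype m] [Fintype n]
    [DecidableEq n] [CommSemiring R] {M : Matrix m n R} (hM : Mᵀ * M = 1) (N : Matrix n o R)
    (c : o) : ∑ x, (M * N) x c ^ 2 = ∑ x, N x c ^ 2 := by
  rw [← transpose_mul_self_apply_self, ← transpose_mul_self_apply_self, transpose_mul,
    Matrix.mul_assoc, ← Matrix.mul_assoc Mᵀ, hM, Matrix.one_mul]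

/-- t-product multiplication by an orthogonal tensor preserves the
Frobenius norm. -/
theorem orth_tprod_fro {n n2 n3 : ℕ} [NeZero n3]
    (U : Fin n → Fin n → ZMod n3 → ℝ) (hU : IsOrthT U)
    (T : Fin n → Fin n2 → ZMod n3 → ℝ) :
    Real.sqrt (∑ i : Fin n, ∑ j : Fin n2, ∑ k : ZMod n3, (tProd3 U T i j k) ^ 2) =
      Real.sqrt (∑ i : Fin n, ∑ j : Fin n2, ∑ k : ZMod n3, (T i j k) ^ 2) := by
  have lateral_slice : ∀ (X : Fin n → Fin n2 → ZMod n3 → ℝ) (j : Fin n2),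
      ∑ i, ∑ k, X i j k ^ 2 = ∑ x, bcirc X x (j, 0) ^ 2 := by
    intro X j
    simp only [bcirc, Fintype.sum_prod_type, sub_zero]
  congr 1
  refine Finset.sum_comm.trans (Eq.trans (Finset.sum_congr rfl fun j _ => ?_) Finset.sum_comm)
  rw [lateral_slice, lateral_slice, bcirc_tProd3,
    sum_sq_mul_apply_of_transpose_mul_self hU.transpose_bcirc_mul_self]
end
end

section
/- Every third-order tensor T ∈ ℝ^{n1×n2×n3} admits a t-SVD: there exist orthogonal tensors U ∈ ℝ^{n1×n1×n3} and V ∈ ℝ^{n2×n2×n3} and an f-diagonal tensor S ∈ ℝ^{n1×n2×n3} such that T = U * S * Vᵀ. -/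
open Finset Complex

noncomputable section

/-- f-diagonal tensor: every frontal slice is a diagonal matrix. -/
def fDiag {R : Type*} [Zero R] {n1 n2 n3 : ℕ} (S : Fin n1 → Fin n2 → ZMod n3 → R) : Prop :=
  ∀ (i : Fin n1) (j : Fin n2) (k : ZMod n3), (i : ℕ) ≠ (j : ℕ) → S i j k = 0

/-!
The mode-3 DFT turns the t-product into slice-wise matrix products, the tensor transpose into
the conjugate transpose and the identity tensor into identity matrices, and it identifies real
tensors with slice sequences satisfying `M (-l) = conj (M l)`. It therefore suffices to pick
matrix SVDs of the DFT slices with the same conjugate symmetry: pick any SVD on one slice of each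
pair `{l, -l}` and its conjugate on the other, and on a self-conjugate slice, which is real, a
real SVD. The matrix SVD comes from diagonalising `Aᴴ * A = V D Vᴴ`: the columns of `A * V` are
pairwise orthogonal, and normalising them and extending to an orthonormal basis gives `U`.
-/

open Matrix ZMod
open scoped ComplexConjugate InnerProductSpace

theorem exists_orthonormalBasis_forall_eq_norm_smul {ι 𝕜 E : Type*} [Fintype ι] [RCLike 𝕜]
    [NormedAddCommGroup E] [InnerProductSpace 𝕜 E] [FiniteDimensional 𝕜 E]
    (card_ι : Module.finrank 𝕜 E = Fintype.card ι)
    {w : ι → E} (hw : Pairwise fun i j => ⟪w i, w j⟫_𝕜 = 0) :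
    ∃ b : OrthonormalBasis ι 𝕜 E, ∀ i, w i = (‖w i‖ : 𝕜) • b i := by
  let v : ι → E := fun i => (‖w i‖⁻¹ : 𝕜) • w i
  have hv : Orthonormal 𝕜 ({i | w i ≠ 0}.domRestrict v) := by
    refine ⟨fun i => ?_, fun i k hik => ?_⟩
    · simp [v, norm_smul, inv_mul_cancel₀ (norm_ne_zero_iff.mpr i.2)]
    · simp [v, inner_smul_left, inner_smul_right, hw (Subtype.coe_ne_coe.mpr hik)]
  obtain ⟨b, hb⟩ := hv.exists_orthonormalBasis_extension_of_card_eq card_ι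
  refine ⟨b, fun i => ?_⟩
  by_cases hi : w i = 0
  · simp [hi]
  · rw [hb i hi, smul_inv_smul₀ (by simpa using hi)]

theorem Function.Involutive.exists_equivariant_choice {ι X : Type*} {σ : ι → ι} {τ : X → X}
    (hσ : Function.Involutive σ) (hτ : Function.Involutive τ) {P : ι → X → Prop}
    (hP : ∀ i x, P i x → P (σ i) (τ x)) (h : ∀ i, ∃ x, P i x ∧ (σ i = i → τ x = x)) :
    ∃ f : ι → X, (∀ i, P i (f i)) ∧ ∀ i, f (σ i) = τ (f i) := by
  classical
  obtain ⟨_, -⟩ := exists_wellFoundedLT ι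
  choose g hgP hgfix using h
  -- choose freely on one point of each two-element orbit and transport to the other
  refine ⟨fun i => if i ≤ σ i then g i else τ (g (σ i)), fun i => ?_, fun i => ?_⟩
  · dsimp only
    split_ifs
    · exact hgP i
    · simpa [hσ i] using hP _ _ (hgP (σ i))
  · rcases lt_trichotomy i (σ i) with hi | hi | hi
    · simp [hσ i, hi.le, hi.not_ge]
    · simp [← hi, hgfix i hi.symm]
    · simp [hσ i, hi.le, hi.not_ge, hτ _]

namespace Matrix

structure IsSVD {R : Type*} [CommRing R] [StarRing R] {m n : ℕ} (A : Matrix (Fin m) (Fin n) R)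
    (U : Matrix (Fin m) (Fin m) R) (S : Matrix (Fin m) (Fin n) R)
    (V : Matrix (Fin n) (Fin n) R) : Prop where
  left_mem_unitaryGroup : U ∈ unitaryGroup (Fin m) R
  right_mem_unitaryGroup : V ∈ unitaryGroup (Fin n) R
  apply_eq_zero_of_val_ne : ∀ (i : Fin m) (j : Fin n), (i : ℕ) ≠ j → S i j = 0
  eq_mul_mul_conjTranspose : A = U * S * Vᴴ

namespace IsSVD

variable {R R' : Type*} [CommRing R] [StarRing R] [CommRing R'] [StarRing R'] {m n : ℕ}
  {A : Matrix (Fin m) (Fin n) R} {U : Matrix (Fin m) (Fin m) R} {S : Matrix (Fin m) (Fin n) R}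
  {V : Matrix (Fin n) (Fin n) R}

theorem conjTranspose (h : IsSVD A U S V) : IsSVD Aᴴ V Sᴴ U where
  left_mem_unitaryGroup := h.right_mem_unitaryGroup
  right_mem_unitaryGroup := h.left_mem_unitaryGroup
  apply_eq_zero_of_val_ne i j hij := by
    simp [h.apply_eq_zero_of_val_ne j i (Ne.symm hij)]
  eq_mul_mul_conjTranspose := by
    simp [h.eq_mul_mul_conjTranspose, Matrix.mul_assoc]

theorem map (h : IsSVD A U S V) (f : R →+* R') (hf : ∀ x, f (star x) = star (f x)) :
    IsSVD (A.map f) (U.map f) (S.map f) (V.map f) := by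
  have map_unitary : ∀ {k : ℕ} {W : Matrix (Fin k) (Fin k) R}, W ∈ unitaryGroup (Fin k) R →
      W.map f ∈ unitaryGroup (Fin k) R' := fun hW => by
    rw [mem_unitaryGroup_iff, star_eq_conjTranspose, ← conjTranspose_map f hf, ← Matrix.map_mul,
      ← star_eq_conjTranspose, mem_unitaryGroup_iff.mp hW, Matrix.map_one f f.map_zero f.map_one]
  refine ⟨map_unitary h.left_mem_unitaryGroup, map_unitary h.right_mem_unitaryGroup,
    fun i j hij => by simp [h.apply_eq_zero_of_val_ne i j hij], ?_⟩
  rw [h.eq_mul_mul_conjTranspose, Matrix.map_mul, Matrix.map_mul, conjTranspose_map f hf]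

end IsSVD

variable {𝕜 : Type*} [RCLike 𝕜] {m n : ℕ}

theorem exists_unitary_mul_eq_of_isDiag_conjTranspose_mul_self (hnm : n ≤ m)
    (B : Matrix (Fin m) (Fin n) 𝕜) (hB : (Bᴴ * B).IsDiag) :
    ∃ U ∈ unitaryGroup (Fin m) 𝕜, ∃ S : Matrix (Fin m) (Fin n) 𝕜,
      (∀ (i : Fin m) (j : Fin n), (i : ℕ) ≠ j → S i j = 0) ∧ B = U * S := by
  let col : Fin m → EuclideanSpace 𝕜 (Fin m) := fun i =>
    WithLp.toLp 2 fun x => if h : (i : ℕ) < n then B x ⟨i, h⟩ else 0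
  have col_castLE (j : Fin n) (x : Fin m) : col (Fin.castLE hnm j) x = B x j := by simp [col]
  have hcol : Pairwise fun i k => ⟪col i, col k⟫_𝕜 = 0 := by
    intro i k hik
    simp only [col, EuclideanSpace.inner_toLp_toLp]
    by_cases hi : (i : ℕ) < n
    · by_cases hk : (k : ℕ) < n
      · simp only [dif_pos hi, dif_pos hk]
        rw [dotProduct_comm]
        exact hB (show (⟨i, hi⟩ : Fin n) ≠ ⟨k, hk⟩ by simpa [Fin.ext_iff] using hik)
      · simp [dif_neg hk, dotProduct]
    · simp [dif_neg hi, dotProduct]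
  obtain ⟨b, hb⟩ := exists_orthonormalBasis_forall_eq_norm_smul (by simp) hcol
  refine ⟨(EuclideanSpace.basisFun _ 𝕜).toBasis.toMatrix b,
    (EuclideanSpace.basisFun _ 𝕜).toMatrix_orthonormalBasis_mem_unitary b,
    of fun i j => if (i : ℕ) = j then (‖col i‖ : 𝕜) else 0, fun i j hij => if_neg hij, ?_⟩
  ext x j
  rw [mul_apply, Finset.sum_eq_single (Fin.castLE hnm j)
    (fun i _ hi => by simp [show (i : ℕ) ≠ j from fun e => hi (Fin.ext e)]) (by simp),
    ← col_castLE, hb]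
  simp [Module.Basis.toMatrix_apply, RCLike.real_smul_eq_coe_mul, mul_comm]

theorem exists_isSVD_of_le (hnm : n ≤ m) (A : Matrix (Fin m) (Fin n) 𝕜) :
    ∃ U S V, IsSVD A U S V := by
  have hH : (Aᴴ * A).IsHermitian := isHermitian_conjTranspose_mul_self A
  let V : Matrix (Fin n) (Fin n) 𝕜 := hH.eigenvectorUnitary
  have hV : V ∈ unitaryGroup (Fin n) 𝕜 := hH.eigenvectorUnitary.2
  have hdiag : ((A * V)ᴴ * (A * V)).IsDiag := by
    have := hH.conjStarAlgAut_star_eigenvectorUnitary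
    rw [Unitary.conjStarAlgAut_star_apply] at this
    rw [conjTranspose_mul, ← star_eq_conjTranspose, Matrix.mul_assoc, ← Matrix.mul_assoc Aᴴ,
      ← Matrix.mul_assoc]
    exact this ▸ isDiag_diagonal _
  obtain ⟨U, hU, S, hS, hAV⟩ := exists_unitary_mul_eq_of_isDiag_conjTranspose_mul_self hnm _ hdiag
  refine ⟨U, S, V, hU, hV, hS, ?_⟩
  rw [← hAV, Matrix.mul_assoc, ← star_eq_conjTranspose, Unitary.mul_star_self_of_mem hV,
    Matrix.mul_one]

theorem exists_isSVD (A : Matrix (Fin m) (Fin n) 𝕜) : ∃ U S V, IsSVD A U S V := by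
  rcases le_total n m with h | h
  · exact exists_isSVD_of_le h A
  · obtain ⟨U, S, V, hA⟩ := exists_isSVD_of_le h Aᴴ
    exact ⟨V, Sᴴ, U, by simpa using hA.conjTranspose⟩

theorem map_ofReal_re_of_map_conj_eq {p q : Type*} {A : Matrix p q ℂ} (hA : A.map conj = A) :
    (A.map re).map ofReal = A := by
  ext i j
  exact conj_eq_iff_re.mp (congrFun (congrFun hA i) j)

theorem exists_isSVD_map_conj_eq_of_map_conj_eq {A : Matrix (Fin m) (Fin n) ℂ}
    (hA : A.map conj = A) :
    ∃ U S V, IsSVD A U S V ∧ U.map conj = U ∧ S.map conj = S ∧ V.map conj = V := by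
  obtain ⟨U, S, V, h⟩ := exists_isSVD (A.map re)
  have conj_map_ofReal {k l : ℕ} (X : Matrix (Fin k) (Fin l) ℝ) :
      (X.map ofReal).map conj = X.map ofReal := by simp [Matrix.map_map, Function.comp_def]
  refine ⟨U.map ofReal, S.map ofReal, V.map ofReal, ?_, conj_map_ofReal U, conj_map_ofReal S,
    conj_map_ofReal V⟩
  rw [← map_ofReal_re_of_map_conj_eq hA]
  exact h.map ofRealHom fun x => (conj_ofReal x).symm

theorem exists_isSVD_family_of_map_conj {ι : Type*} {σ : ι → ι} (hσ : Function.Involutive σ)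
    (M : ι → Matrix (Fin m) (Fin n) ℂ) (hM : ∀ l, M (σ l) = (M l).map conj) :
    ∃ (U : ι → Matrix (Fin m) (Fin m) ℂ) (S : ι → Matrix (Fin m) (Fin n) ℂ)
      (V : ι → Matrix (Fin n) (Fin n) ℂ), (∀ l, IsSVD (M l) (U l) (S l) (V l)) ∧
      ∀ l, U (σ l) = (U l).map conj ∧ S (σ l) = (S l).map conj ∧ V (σ l) = (V l).map conj := by
  let τ (x : Matrix (Fin m) (Fin m) ℂ × Matrix (Fin m) (Fin n) ℂ × Matrix (Fin n) (Fin n) ℂ) :=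
    (x.1.map conj, x.2.1.map conj, x.2.2.map conj)
  have hτ : Function.Involutive τ := fun x => by simp [τ, Matrix.map_map, Function.comp_def]
  have exists_svd (l : ι) : ∃ x, IsSVD (M l) x.1 x.2.1 x.2.2 ∧ (σ l = l → τ x = x) := by
    by_cases hl : σ l = l
    · obtain ⟨U, S, V, h, hU, hS, hV⟩ :=
        exists_isSVD_map_conj_eq_of_map_conj_eq (hl ▸ hM l).symm
      exact ⟨(U, S, V), h, fun _ => by simp [τ, hU, hS, hV]⟩
    · obtain ⟨U, S, V, h⟩ := exists_isSVD (M l)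
      exact ⟨(U, S, V), h, fun h' => absurd h' hl⟩
  obtain ⟨f, hf, hfσ⟩ := hσ.exists_equivariant_choice hτ
    (P := fun l x => IsSVD (M l) x.1 x.2.1 x.2.2)
    (fun l x hx => hM l ▸ hx.map (starRingEnd ℂ) fun _ => rfl) exists_svd
  exact ⟨fun l => (f l).1, fun l => (f l).2.1, fun l => (f l).2.2, hf, fun l => by
    simp [hfσ l, τ]⟩

end Matrix

namespace ZMod

variable {N : ℕ} [NeZero N]

theorem dft_cconv (f g : ZMod N → ℂ) (l : ZMod N) : 𝓕 (cconv f g) l = 𝓕 f l * 𝓕 g l := by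
  rw [dft_apply, dft_apply, dft_apply, Finset.sum_mul_sum]
  simp only [cconv, smul_eq_mul, Finset.mul_sum]
  conv_lhs => rw [Finset.sum_comm]
  refine Finset.sum_congr rfl fun j _ => ?_
  rw [← Equiv.sum_comp (Equiv.addLeft j)]
  refine Finset.sum_congr rfl fun k _ => ?_
  simp only [Equiv.coe_addLeft, add_sub_cancel_left, add_mul, neg_add, AddChar.map_add_eq_mul]
  ring

theorem conj_dft (Φ : ZMod N → ℂ) (k : ZMod N) :
    conj (𝓕 Φ k) = 𝓕 (fun j => conj (Φ j)) (-k) := by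
  simp [dft_apply, ← AddChar.map_neg_eq_conj]

theorem dft_ofReal_neg (f : ZMod N → ℝ) (k : ZMod N) :
    𝓕 (fun j => (f j : ℂ)) (-k) = conj (𝓕 (fun j => (f j : ℂ)) k) := by
  simp [conj_dft]

theorem conj_invDFT {g : ZMod N → ℂ} (hg : ∀ k, g (-k) = conj (g k)) (j : ZMod N) :
    conj (𝓕⁻ g j) = 𝓕⁻ g j := by
  have : (fun k => conj (g k)) = fun k => g (-k) := funext fun k => (hg k).symm
  rw [invDFT_apply', smul_eq_mul, map_mul, conj_dft]
  simp [this, dft_comp_neg]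

end ZMod

section sliceDFT

variable {N : ℕ} [NeZero N] {a b c : ℕ}

def sliceDFT (T : Fin a → Fin b → ZMod N → ℝ) (l : ZMod N) : Matrix (Fin a) (Fin b) ℂ :=
  Matrix.of fun i j => 𝓕 (fun k => (T i j k : ℂ)) l

-- Taking real parts loses nothing only for conjugate-symmetric `g` (`sliceDFT_sliceInvDFT`).
def sliceInvDFT (g : ZMod N → Matrix (Fin a) (Fin b) ℂ) : Fin a → Fin b → ZMod N → ℝ :=
  fun i j k => (𝓕⁻ (fun l => g l i j) k).re

theorem sliceDFT_injective : Function.Injective (sliceDFT (N := N) (a := a) (b := b)) := by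
  intro A B h
  funext i j k
  have := congrFun (dft.injective (funext fun l => congrFun (congrFun (congrFun h l) i) j :
    𝓕 (fun k => (A i j k : ℂ)) = 𝓕 (fun k => (B i j k : ℂ)))) k
  exact_mod_cast this

theorem sliceDFT_tProd3 (A : Fin a → Fin b → ZMod N → ℝ) (B : Fin b → Fin c → ZMod N → ℝ)
    (l : ZMod N) : sliceDFT (tProd3 A B) l = sliceDFT A l * sliceDFT B l := by
  ext i j
  have : (fun k => ((tProd3 A B i j k : ℝ) : ℂ)) =
      ∑ x, cconv (fun k => (A i x k : ℂ)) (fun k => (B x j k : ℂ)) := by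
    funext k
    simp [tProd3, cconv]
  simp [sliceDFT, mul_apply, this, dft_cconv]

theorem sliceDFT_neg (T : Fin a → Fin b → ZMod N → ℝ) (l : ZMod N) :
    sliceDFT T (-l) = (sliceDFT T l).map conj := by
  ext i j
  exact dft_ofReal_neg _ l

theorem sliceDFT_ttrans (T : Fin a → Fin b → ZMod N → ℝ) (l : ZMod N) :
    sliceDFT (ttrans T) l = (sliceDFT T l)ᴴ := by
  ext j i
  simp [sliceDFT, ttrans, dft_comp_neg (fun k => (T i j k : ℂ)), dft_ofReal_neg]

theorem sliceDFT_tid (l : ZMod N) : sliceDFT (tid (n := a)) l = 1 := by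
  ext i j
  by_cases h : i = j <;> simp [sliceDFT, tid, h, dft_apply, one_apply, apply_ite ofReal]

theorem sliceDFT_sliceInvDFT {g : ZMod N → Matrix (Fin a) (Fin b) ℂ}
    (hg : ∀ l, g (-l) = (g l).map conj) : sliceDFT (sliceInvDFT g) = g := by
  funext l
  ext i j
  have : (fun k => ((sliceInvDFT g i j k : ℝ) : ℂ)) = 𝓕⁻ fun l => g l i j := by
    funext k
    exact conj_eq_iff_re.mp (conj_invDFT (fun l => by simp [hg l]) k)
  simp [sliceDFT, this]

theorem isOrthT_iff {U : Fin a → Fin a → ZMod N → ℝ} :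
    IsOrthT U ↔ ∀ l, sliceDFT U l ∈ unitaryGroup (Fin a) ℂ := by
  simp only [IsOrthT, ← sliceDFT_injective.eq_iff, funext_iff, sliceDFT_tProd3, sliceDFT_ttrans,
    sliceDFT_tid, Unitary.mem_iff, star_eq_conjTranspose, forall_and]

theorem fDiag_iff {S : Fin a → Fin b → ZMod N → ℝ} :
    fDiag S ↔ ∀ l (i : Fin a) (j : Fin b), (i : ℕ) ≠ j → sliceDFT S l i j = 0 := by
  have dft_eq_zero_iff (f : ZMod N → ℝ) : (∀ l, 𝓕 (fun k => (f k : ℂ)) l = 0) ↔ ∀ k, f k = 0 := by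
    simpa only [funext_iff, Pi.zero_apply, ofReal_eq_zero] using
      dft.map_eq_zero_iff (x := fun k => (f k : ℂ))
  exact ⟨fun h l i j hij => (dft_eq_zero_iff _).mpr (fun k => h i j k hij) l,
    fun h i j k hij => (dft_eq_zero_iff _).mp (fun l => h l i j hij) k⟩

theorem tsvd_of_forall_isSVD_sliceDFT {T : Fin a → Fin b → ZMod N → ℝ}
    {U : Fin a → Fin a → ZMod N → ℝ} {S : Fin a → Fin b → ZMod N → ℝ}
    {V : Fin b → Fin b → ZMod N → ℝ}
    (h : ∀ l, (sliceDFT T l).IsSVD (sliceDFT U l) (sliceDFT S l) (sliceDFT V l)) :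
    IsOrthT U ∧ IsOrthT V ∧ fDiag S ∧ T = tProd3 (tProd3 U S) (ttrans V) :=
  ⟨isOrthT_iff.mpr fun l => (h l).left_mem_unitaryGroup,
    isOrthT_iff.mpr fun l => (h l).right_mem_unitaryGroup,
    fDiag_iff.mpr fun l => (h l).apply_eq_zero_of_val_ne,
    sliceDFT_injective <| funext fun l => by
      rw [sliceDFT_tProd3, sliceDFT_tProd3, sliceDFT_ttrans]
      exact (h l).eq_mul_mul_conjTranspose⟩

end sliceDFT

/-- every third-order real tensor admits a t-SVD. -/
theorem tsvd_exists {n1 n2 n3 : ℕ} [NeZero n3] (T : Fin n1 → Fin n2 → ZMod n3 → ℝ) :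
    ∃ (U : Fin n1 → Fin n1 → ZMod n3 → ℝ) (S : Fin n1 → Fin n2 → ZMod n3 → ℝ)
      (V : Fin n2 → Fin n2 → ZMod n3 → ℝ),
      IsOrthT U ∧ IsOrthT V ∧ fDiag S ∧ T = tProd3 (tProd3 U S) (ttrans V) := by
  obtain ⟨U, S, V, hsvd, hconj⟩ :=
    exists_isSVD_family_of_map_conj neg_involutive (sliceDFT T) (sliceDFT_neg T)
  refine ⟨sliceInvDFT U, sliceInvDFT S, sliceInvDFT V, tsvd_of_forall_isSVD_sliceDFT fun l => ?_⟩
  rw [sliceDFT_sliceInvDFT fun l => (hconj l).1, sliceDFT_sliceInvDFT fun l => (hconj l).2.1,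
    sliceDFT_sliceInvDFT fun l => (hconj l).2.2]
  exact hsvd l
end
end
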